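/- Define G on elements M_f e_n M_g of the C*-algebra U by G(M_f e_n M_g) = f · λ^{-[n]} · g, where λ^{-[n]}(x) = ∏_{i=0}^{n-1} p(T^i x) and e_n = S^n(S*)^n. Let ν_β satisfy ℒ_β^* ν_β = λ_β ν_β and define ψ(M_f e_n M_g) = ∫ f λ^{-[n]} g dν_β. Then ψ satisfies the KMS condition at inverse temperature β for the generators: for all continuous a,b,c,d and all n, ψ((M_a e_n M_b) σ_{iβ}(M_c e_n M_d)) = ψ((M_c e_n M_d)(M_a e_n M_b)), where σ_{iβ}(M_c e_n M_d) = M_c M_{H^{-β[n]}} e_n M_{H^{β[n]}} M_d. -/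

import Mathlib

open MeasureTheory Finset

/-- The full shift space `{1,…,k}^ℕ`, modeled as `ℕ → Fin k`. -/
abbrev ShiftSpace (k : ℕ) := ℕ → Fin k

/-- The left shift `T`. -/
def shiftT {k : ℕ} (x : ShiftSpace k) : ShiftSpace k := fun n => x (n + 1)

/-- Prepending a symbol: the `k` preimages of `x` under the shift are `consS i x`. -/
def consS {k : ℕ} (i : Fin k) (x : ShiftSpace k) : ShiftSpace k :=
  fun n => Nat.casesOn n i x

/-- The Ruelle operator `ℒ_p f (x) = ∑_{T z = x} p z · f z` on complex functions. -/
noncomputable def ruelleOp {k : ℕ} (p : ShiftSpace k → ℝ) (f : ShiftSpace k → ℂ) :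
    ShiftSpace k → ℂ :=
  fun x => ∑ i : Fin k, (p (consS i x) : ℂ) * f (consS i x)

/-- The Ruelle operator on real functions. -/
noncomputable def ruelleOpR {k : ℕ} (p : ShiftSpace k → ℝ) (f : ShiftSpace k → ℝ) :
    ShiftSpace k → ℝ :=
  fun x => ∑ i : Fin k, p (consS i x) * f (consS i x)

/-- Hölder continuity with respect to the standard ultrametric on the shift space:
`|f x - f y| ≤ C · 2^{-α n}` whenever `x` and `y` agree on the first `n` coordinates. -/
def HolderSeq {k : ℕ} (f : ShiftSpace k → ℝ) : Prop :=
  ∃ C α : ℝ, 0 < α ∧ ∀ x y : ShiftSpace k, ∀ n : ℕ,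
    (∀ m < n, x m = y m) → |f x - f y| ≤ C * (2 : ℝ) ^ (-(α * n))

/-- `λ^{-[n]}(x) = ∏_{i<n} p(T^i x)`. -/
noncomputable def lamInv {k : ℕ} (p : ShiftSpace k → ℝ) (n : ℕ) (x : ShiftSpace k) : ℝ :=
  ∏ i ∈ Finset.range n, p (shiftT^[i] x)

/-- `H^{β[n]}(x) = ∏_{i<n} H(T^i x)^β`. -/
noncomputable def hPow {k : ℕ} (H : ShiftSpace k → ℝ) (β : ℝ) (n : ℕ)
    (x : ShiftSpace k) : ℝ :=
  ∏ i ∈ Finset.range n, H (shiftT^[i] x) ^ β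

/-- `Λ_n = H^{-β[n]} · λ^{[n]}`. -/
noncomputable def lambdaN {k : ℕ} (p H : ShiftSpace k → ℝ) (β : ℝ) (n : ℕ)
    (x : ShiftSpace k) : ℝ :=
  hPow H (-β) n x * (lamInv p n x)⁻¹

/-- The Ruelle operator `ℒ_{-β log H}` on real functions. -/
noncomputable def ruelleH {k : ℕ} (H : ShiftSpace k → ℝ) (β : ℝ) (f : ShiftSpace k → ℝ) :
    ShiftSpace k → ℝ :=
  fun x => ∑ i : Fin k, H (consS i x) ^ (-β) * f (consS i x)

/-!
Compressing by `e_n = Sⁿ S*ⁿ` turns multiplication operators into conditional expectations: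
`S*` acts on `L²(μ)` as the Ruelle operator `ℒ_p` (this is where `ℒ_p^* μ = μ` enters), so
`e_n M_q e_n = M_{E_n q} e_n` with `E_n q = (ℒ_pⁿ q) ∘ Tⁿ`. By the defining formula of `ψ`, both
sides of the KMS identity become `ν`-integrals of functions of the form `(F ∘ Tⁿ) · G`. As `ν` is
an eigenmeasure of `ℒ = ℒ_{-β log H}`, such an integral is `λ⁻ⁿ` times the integral of its image
under `ℒⁿ`, and splitting the weight as `p = H^{-β} · (p H^β)` gives
`ℒⁿ((F ∘ Tⁿ) · λ^{-[n]} H^{β[n]} · G) = F · ℒ_pⁿ G`. Both sides thereby reduce to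
`ℒ_pⁿ(b c H^{-β[n]}) · ℒ_pⁿ(a d)`.
-/

open scoped ENNReal InnerProductSpace

section Operators

variable {α : Type*} [MeasurableSpace α] {μ : Measure α} {r : ℝ≥0∞} [Fact (1 ≤ r)]

variable (μ) in
def IsMultiplicationOperator (q : α → ℂ) (M : Lp ℂ r μ →L[ℂ] Lp ℂ r μ) : Prop :=
  ∀ η : Lp ℂ r μ, ∀ᵐ x ∂μ, M η x = q x * η x

variable (μ) in
def IsKoopmanOperator (T : α → α) (S : Lp ℂ r μ →L[ℂ] Lp ℂ r μ) : Prop :=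
  ∀ η : Lp ℂ r μ, ∀ᵐ x ∂μ, S η x = η (T x)

namespace IsMultiplicationOperator

variable {q q' : α → ℂ} {M M' : Lp ℂ r μ →L[ℂ] Lp ℂ r μ}

theorem mul (hM : IsMultiplicationOperator μ q M) (hM' : IsMultiplicationOperator μ q' M') :
    IsMultiplicationOperator μ (q * q') (M * M') := fun η => by
  filter_upwards [hM (M' η), hM' η] with x hx hx'
  rw [mul_apply_eq_comp, hx, hx', Pi.mul_apply, mul_assoc]

theorem unique (hM : IsMultiplicationOperator μ q M) (hM' : IsMultiplicationOperator μ q M') :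
    M = M' :=
  ContinuousLinearMap.ext fun η => Lp.ext <| by
    filter_upwards [hM η, hM' η] with x hx hx'
    rw [hx, hx']

end IsMultiplicationOperator

theorem MemLp.exists_isMultiplicationOperator {q : α → ℂ} (hq : MemLp q ∞ μ) :
    ∃ M : Lp ℂ r μ →L[ℂ] Lp ℂ r μ, IsMultiplicationOperator μ q M :=
  ⟨(ContinuousLinearMap.mul ℂ ℂ).holderL μ ∞ r r (hq.toLp q), fun η => by
    filter_upwards [(ContinuousLinearMap.mul ℂ ℂ).coeFn_holder (r := r) (hq.toLp q) η,
      hq.coeFn_toLp] with x hx hqx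
    rw [ContinuousLinearMap.holderL_apply_apply, hx, ContinuousLinearMap.mul_apply', hqx]⟩

theorem Continuous.exists_isMultiplicationOperator [TopologicalSpace α] [CompactSpace α]
    [OpensMeasurableSpace α] {q : α → ℂ} (hq : Continuous q) :
    ∃ M : Lp ℂ r μ →L[ℂ] Lp ℂ r μ, IsMultiplicationOperator μ q M :=
  MemLp.exists_isMultiplicationOperator (hq.memLp_top_of_hasCompactSupport (.of_compactSpace q) μ)

namespace IsKoopmanOperator

variable {T : α → α} {S : Lp ℂ r μ →L[ℂ] Lp ℂ r μ}

theorem pow (hT : Measure.QuasiMeasurePreserving T μ μ) (hS : IsKoopmanOperator μ T S) (n : ℕ) :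
    IsKoopmanOperator μ T^[n] (S ^ n) := by
  induction n with
  | zero => exact fun η => by simp
  | succ n ih =>
    intro η
    filter_upwards [ih (S η), (hT.iterate n).ae_eq_comp (hS η)] with x hx hx'
    simp only [Function.comp_apply] at hx'
    rw [pow_succ, mul_apply_eq_comp, hx, hx', Function.iterate_succ_apply']

theorem mul_eq_mul (hT : Measure.QuasiMeasurePreserving T μ μ) (hS : IsKoopmanOperator μ T S)
    {v : α → ℂ} {M M' : Lp ℂ r μ →L[ℂ] Lp ℂ r μ} (hM : IsMultiplicationOperator μ v M)
    (hM' : IsMultiplicationOperator μ (v ∘ T) M') : S * M = M' * S :=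
  ContinuousLinearMap.ext fun η => Lp.ext <| by
    filter_upwards [hS (M η), hT.ae_eq_comp (hM η), hM' (S η), hS η] with x h₁ h₂ h₃ h₄
    simp only [Function.comp_apply] at h₂ h₃
    rw [mul_apply_eq_comp, mul_apply_eq_comp, h₁, h₂, h₃, h₄]

end IsKoopmanOperator

theorem ContinuousLinearMap.ext_of_inner_toLp [TopologicalSpace α] [CompactSpace α]
    [NormalSpace α] [BorelSpace α] [IsFiniteMeasure μ] [μ.WeaklyRegular]
    {A B : Lp ℂ 2 μ →L[ℂ] Lp ℂ 2 μ}
    (h : ∀ f g : C(α, ℂ), ⟪ContinuousMap.toLp 2 μ ℂ f, A (ContinuousMap.toLp 2 μ ℂ g)⟫_ℂ =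
      ⟪ContinuousMap.toLp 2 μ ℂ f, B (ContinuousMap.toLp 2 μ ℂ g)⟫_ℂ) :
    A = B := by
  have hdense := ContinuousMap.toLp_denseRange ℂ μ ℂ (p := 2) (by norm_num)
  have hdense_eq : ∀ g : C(α, ℂ), A (ContinuousMap.toLp 2 μ ℂ g) = B (ContinuousMap.toLp 2 μ ℂ g) :=
    fun g => ext_inner_left ℂ <| congrFun <| hdense.equalizer
      (continuous_id.inner continuous_const) (continuous_id.inner continuous_const)
      (funext fun f => h f g)
  exact ContinuousLinearMap.ext <| congrFun <| hdense.equalizer A.continuous B.continuous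
    (funext hdense_eq)

end Operators

section RuelleOperator

variable {k : ℕ}

@[simp]
theorem shiftT_consS (i : Fin k) (x : ShiftSpace k) : shiftT (consS i x) = x := rfl

@[fun_prop]
theorem continuous_shiftT : Continuous (shiftT : ShiftSpace k → ShiftSpace k) :=
  continuous_pi fun n => continuous_apply (n + 1)

theorem continuous_consS (i : Fin k) : Continuous (consS i : ShiftSpace k → ShiftSpace k) :=
  continuous_pi fun n => by
    cases n with
    | zero => exact continuous_const
    | succ m => exact continuous_apply m

theorem continuous_ruelleOp {W : ShiftSpace k → ℝ} {f : ShiftSpace k → ℂ} (hW : Continuous W)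
    (hf : Continuous f) : Continuous (ruelleOp W f) :=
  continuous_finsetSum _ fun i _ =>
    (Complex.continuous_ofReal.comp (hW.comp (continuous_consS i))).mul
      (hf.comp (continuous_consS i))

theorem continuous_iterate_ruelleOp {W : ShiftSpace k → ℝ} {f : ShiftSpace k → ℂ}
    (hW : Continuous W) (hf : Continuous f) (n : ℕ) : Continuous ((ruelleOp W)^[n] f) := by
  induction n with
  | zero => exact hf
  | succ n ih => rw [Function.iterate_succ_apply']; exact continuous_ruelleOp hW ih

theorem ruelleOp_comp_shiftT_mul (W : ShiftSpace k → ℝ) (w g : ShiftSpace k → ℂ) :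
    ruelleOp W (fun x => w (shiftT x) * g x) = fun x => w x * ruelleOp W g x := by
  funext x
  simp only [ruelleOp, shiftT_consS, mul_sum]
  exact sum_congr rfl fun i _ => mul_left_comm _ _ _

theorem iterate_ruelleOp_comp_shiftT_mul (W : ShiftSpace k → ℝ) (w g : ShiftSpace k → ℂ) (n : ℕ) :
    (ruelleOp W)^[n] (fun x => w (shiftT^[n] x) * g x) = fun x => w x * (ruelleOp W)^[n] g x := by
  induction n generalizing g with
  | zero => rfl
  | succ n ih =>
    rw [Function.iterate_succ_apply, Function.iterate_succ_apply]
    exact (congrArg _ (ruelleOp_comp_shiftT_mul W (fun y => w (shiftT^[n] y)) g)).trans (ih _)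

theorem lamInv_succ (V : ShiftSpace k → ℝ) (n : ℕ) (x : ShiftSpace k) :
    lamInv V (n + 1) x = lamInv V n (shiftT x) * V x := by
  simp only [lamInv, prod_range_succ', Function.iterate_succ_apply, Function.iterate_zero_apply]

theorem lamInv_mul (V V' : ShiftSpace k → ℝ) (n : ℕ) (x : ShiftSpace k) :
    lamInv (V * V') n x = lamInv V n x * lamInv V' n x :=
  prod_mul_distrib

theorem hPow_eq_lamInv (H : ShiftSpace k → ℝ) (β : ℝ) (n : ℕ) :
    hPow H β n = lamInv (fun x => H x ^ β) n := rfl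

theorem hPow_mul_hPow_neg {H : ShiftSpace k → ℝ} (hH : ∀ x, 0 < H x) (β : ℝ) (n : ℕ)
    (x : ShiftSpace k) : hPow H β n x * hPow H (-β) n x = 1 := by
  rw [hPow, hPow, ← prod_mul_distrib]
  exact prod_eq_one fun i _ => by
    rw [Real.rpow_neg (hH _).le, mul_inv_cancel₀ (Real.rpow_pos_of_pos (hH _) β).ne']

theorem iterate_ruelleOp_mul_weight (W V : ShiftSpace k → ℝ) (n : ℕ) (f : ShiftSpace k → ℂ) :
    (ruelleOp (W * V))^[n] f = (ruelleOp W)^[n] (fun x => (lamInv V n x : ℂ) * f x) := by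
  induction n generalizing f with
  | zero => simp [lamInv]
  | succ n ih =>
    rw [Function.iterate_succ_apply, ih, Function.iterate_succ_apply]
    congr 1
    funext x
    simp only [ruelleOp, lamInv_succ, shiftT_consS, Pi.mul_apply, mul_sum, Complex.ofReal_mul]
    exact sum_congr rfl fun i _ => by ring

theorem continuous_lamInv {V : ShiftSpace k → ℝ} (hV : Continuous V) (n : ℕ) :
    Continuous (lamInv V n) :=
  continuous_finsetProd _ fun i _ => hV.comp (continuous_shiftT.iterate i)

theorem continuous_hPow {H : ShiftSpace k → ℝ} (hH : Continuous H) (hH_pos : ∀ x, 0 < H x)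
    (β : ℝ) (n : ℕ) : Continuous (hPow H β n) :=
  continuous_lamInv (hH.rpow_const fun x => Or.inl (hH_pos x).ne') n

/-- The paper's `E_n(u) = (ℒ_p^n u) ∘ Tⁿ`, i.e. `E_μ(u | T⁻ⁿ𝓑)` for the `ℒ_p`-invariant `μ`. -/
noncomputable def condExpShift (p : ShiftSpace k → ℝ) (n : ℕ) (u : ShiftSpace k → ℂ) :
    ShiftSpace k → ℂ :=
  fun x => (ruelleOp p)^[n] u (shiftT^[n] x)

theorem continuous_condExpShift {p : ShiftSpace k → ℝ} (hp : Continuous p) {u : ShiftSpace k → ℂ}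
    (hu : Continuous u) (n : ℕ) : Continuous (condExpShift p n u) :=
  (continuous_iterate_ruelleOp hp hu n).comp (continuous_shiftT.iterate n)

theorem iterate_ruelleOp_condExpShift_mul {p W V : ShiftSpace k → ℝ} (hWV : W * V = p) (n : ℕ)
    (u w : ShiftSpace k → ℂ) :
    (ruelleOp W)^[n] (condExpShift p n u * ((fun x => (lamInv V n x : ℂ)) * w)) =
      (ruelleOp p)^[n] u * (ruelleOp p)^[n] w := by
  change (ruelleOp W)^[n] (fun x => (ruelleOp p)^[n] u (shiftT^[n] x) * (lamInv V n x * w x)) = _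
  rw [iterate_ruelleOp_comp_shiftT_mul, ← iterate_ruelleOp_mul_weight, hWV]
  rfl

end RuelleOperator

section Measures

variable {k : ℕ}

theorem integral_ruelleOp {W : ShiftSpace k → ℝ} (hW : Continuous W) {m : Measure (ShiftSpace k)}
    [IsFiniteMeasure m] {c : ℝ}
    (hm : ∀ f : ShiftSpace k → ℝ, Continuous f → ∫ x, ruelleOpR W f x ∂m = c * ∫ x, f x ∂m)
    {f : ShiftSpace k → ℂ} (hf : Continuous f) :
    ∫ x, ruelleOp W f x ∂m = c * ∫ x, f x ∂m := by
  have hre : ∀ x, (ruelleOp W f x).re = ruelleOpR W (fun y => (f y).re) x := fun x => by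
    simp [ruelleOp, ruelleOpR, Complex.re_sum]
  have him : ∀ x, (ruelleOp W f x).im = ruelleOpR W (fun y => (f y).im) x := fun x => by
    simp [ruelleOp, ruelleOpR, Complex.im_sum]
  have hLf := (continuous_ruelleOp hW hf).integrable_of_hasCompactSupport (.of_compactSpace _)
    (μ := m)
  have hf' := hf.integrable_of_hasCompactSupport (.of_compactSpace _) (μ := m)
  apply Complex.ext
  · calc (∫ x, ruelleOp W f x ∂m).re = ∫ x, ruelleOpR W (fun y => (f y).re) x ∂m := by
          simp only [← hre]; exact (integral_re hLf).symm
      _ = c * (∫ x, f x ∂m).re := by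
          rw [hm (fun y => (f y).re) (Complex.continuous_re.comp hf)]
          exact congrArg _ (integral_re hf')
      _ = (c * ∫ x, f x ∂m).re := (Complex.re_ofReal_mul _ _).symm
  · calc (∫ x, ruelleOp W f x ∂m).im = ∫ x, ruelleOpR W (fun y => (f y).im) x ∂m := by
          simp only [← him]; exact (integral_im hLf).symm
      _ = c * (∫ x, f x ∂m).im := by
          rw [hm (fun y => (f y).im) (Complex.continuous_im.comp hf)]
          exact congrArg _ (integral_im hf')
      _ = (c * ∫ x, f x ∂m).im := (Complex.im_ofReal_mul _ _).symm

theorem integral_iterate_ruelleOp {W : ShiftSpace k → ℝ} (hW : Continuous W)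
    {m : Measure (ShiftSpace k)} [IsFiniteMeasure m] {c : ℝ}
    (hm : ∀ f : ShiftSpace k → ℝ, Continuous f → ∫ x, ruelleOpR W f x ∂m = c * ∫ x, f x ∂m)
    {f : ShiftSpace k → ℂ} (hf : Continuous f) (n : ℕ) :
    ∫ x, (ruelleOp W)^[n] f x ∂m = c ^ n * ∫ x, f x ∂m := by
  induction n with
  | zero => simp
  | succ n ih =>
    rw [Function.iterate_succ_apply', integral_ruelleOp hW hm (continuous_iterate_ruelleOp hW hf n),
      ih]
    ring

theorem measurePreserving_shiftT {p : ShiftSpace k → ℝ}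
    (hp_norm : ∀ x : ShiftSpace k, ∑ i : Fin k, p (consS i x) = 1)
    {μ : Measure (ShiftSpace k)} [IsFiniteMeasure μ]
    (hμ : ∀ f : ShiftSpace k → ℝ, Continuous f → ∫ x, ruelleOpR p f x ∂μ = ∫ x, f x ∂μ) :
    MeasurePreserving shiftT μ μ := by
  refine ⟨continuous_shiftT.measurable, ext_of_forall_integral_eq_of_IsFiniteMeasure fun f => ?_⟩
  have hpf : ruelleOpR p (fun x => f (shiftT x)) = f := funext fun x => by
    simp [ruelleOpR, ← sum_mul, hp_norm]
  rw [integral_map continuous_shiftT.aemeasurable f.continuous.aestronglyMeasurable,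
    ← hμ (fun x => f (shiftT x)) (f.continuous.comp continuous_shiftT)]
  exact congrArg (fun g => ∫ x, g x ∂μ) hpf

end Measures

section KoopmanOperator

variable {k : ℕ} {p : ShiftSpace k → ℝ} {μ : Measure (ShiftSpace k)} [IsFiniteMeasure μ]
  {S : Lp ℂ 2 μ →L[ℂ] Lp ℂ 2 μ} {q : ShiftSpace k → ℂ} {Q : Lp ℂ 2 μ →L[ℂ] Lp ℂ 2 μ}

open ContinuousLinearMap in
theorem adjoint_koopman_mul_koopman (hp : Continuous p)
    (hμ : ∀ f : ShiftSpace k → ℝ, Continuous f → ∫ x, ruelleOpR p f x ∂μ = ∫ x, f x ∂μ)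
    (hT : Measure.QuasiMeasurePreserving shiftT μ μ) (hS : IsKoopmanOperator μ shiftT S)
    (hq : Continuous q) (hQ : IsMultiplicationOperator μ q Q)
    {L : Lp ℂ 2 μ →L[ℂ] Lp ℂ 2 μ} (hL : IsMultiplicationOperator μ (ruelleOp p q) L) :
    adjoint S * Q * S = L := by
  refine ext_of_inner_toLp fun f g => ?_
  have hS_toLp (h : C(ShiftSpace k, ℂ)) :
      ∀ᵐ x ∂μ, S (ContinuousMap.toLp 2 μ ℂ h) x = h (shiftT x) := by
    filter_upwards [hS (ContinuousMap.toLp 2 μ ℂ h),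
      hT.ae_eq_comp (ContinuousMap.coeFn_toLp (p := 2) (𝕜 := ℂ) μ h)] with x hx hx'
    rwa [hx]
  set w : ShiftSpace k → ℂ := fun y => starRingEnd ℂ (f y) * g y with hw
  rw [mul_apply_eq_comp, mul_apply_eq_comp, adjoint_inner_right, L2.inner_def, L2.inner_def]
  calc ∫ x, ⟪S (ContinuousMap.toLp 2 μ ℂ f) x, Q (S (ContinuousMap.toLp 2 μ ℂ g)) x⟫_ℂ ∂μ
      = ∫ x, w (shiftT x) * q x ∂μ := by
        refine integral_congr_ae ?_
        filter_upwards [hS_toLp f, hS_toLp g, hQ (S (ContinuousMap.toLp 2 μ ℂ g))] with x hf hg hq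
        simp only [RCLike.inner_apply, hf, hg, hq, hw]
        ring
    _ = ∫ x, ruelleOp p (fun x => w (shiftT x) * q x) x ∂μ := by
        rw [integral_ruelleOp hp (c := 1) (fun f hf => (hμ f hf).trans (one_mul _).symm)
          (by fun_prop), Complex.ofReal_one, one_mul]
    _ = ∫ x, ⟪ContinuousMap.toLp 2 μ ℂ f x, L (ContinuousMap.toLp 2 μ ℂ g) x⟫_ℂ ∂μ := by
        rw [ruelleOp_comp_shiftT_mul]
        refine integral_congr_ae ?_
        filter_upwards [ContinuousMap.coeFn_toLp (p := 2) (𝕜 := ℂ) μ f,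
          ContinuousMap.coeFn_toLp (p := 2) (𝕜 := ℂ) μ g, hL (ContinuousMap.toLp 2 μ ℂ g)]
          with x hf hg hL
        simp only [RCLike.inner_apply, hf, hg, hL, hw]
        ring

theorem adjoint_koopman_pow_mul_koopman_pow (hp : Continuous p)
    (hμ : ∀ f : ShiftSpace k → ℝ, Continuous f → ∫ x, ruelleOpR p f x ∂μ = ∫ x, f x ∂μ)
    (hT : Measure.QuasiMeasurePreserving shiftT μ μ) (hS : IsKoopmanOperator μ shiftT S)
    (hq : Continuous q) (hQ : IsMultiplicationOperator μ q Q) (n : ℕ)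
    {L : Lp ℂ 2 μ →L[ℂ] Lp ℂ 2 μ} (hL : IsMultiplicationOperator μ ((ruelleOp p)^[n] q) L) :
    ContinuousLinearMap.adjoint S ^ n * Q * S ^ n = L := by
  induction n generalizing L with
  | zero => simpa using hQ.unique hL
  | succ n ih =>
    obtain ⟨Lₙ, hLₙ⟩ := (continuous_iterate_ruelleOp hp hq n).exists_isMultiplicationOperator
      (μ := μ) (r := 2)
    calc ContinuousLinearMap.adjoint S ^ (n + 1) * Q * S ^ (n + 1)
        = ContinuousLinearMap.adjoint S * (ContinuousLinearMap.adjoint S ^ n * Q * S ^ n) * S := by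
          rw [pow_succ' (ContinuousLinearMap.adjoint S), pow_succ S]
          simp only [mul_assoc]
      _ = L := by
          rw [ih hLₙ]
          exact adjoint_koopman_mul_koopman hp hμ hT hS (continuous_iterate_ruelleOp hp hq n) hLₙ
            (Function.iterate_succ_apply' (ruelleOp p) n q ▸ hL)

theorem koopman_sandwich_eq_condExpShift (hp : Continuous p)
    (hμ : ∀ f : ShiftSpace k → ℝ, Continuous f → ∫ x, ruelleOpR p f x ∂μ = ∫ x, f x ∂μ)
    (hT : Measure.QuasiMeasurePreserving shiftT μ μ) (hS : IsKoopmanOperator μ shiftT S)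
    (hq : Continuous q) (hQ : IsMultiplicationOperator μ q Q) (n : ℕ)
    {E : Lp ℂ 2 μ →L[ℂ] Lp ℂ 2 μ} (hE : IsMultiplicationOperator μ (condExpShift p n q) E) :
    S ^ n * ContinuousLinearMap.adjoint S ^ n * Q * (S ^ n * ContinuousLinearMap.adjoint S ^ n) =
      E * (S ^ n * ContinuousLinearMap.adjoint S ^ n) := by
  obtain ⟨L, hL⟩ := (continuous_iterate_ruelleOp hp hq n).exists_isMultiplicationOperator
    (μ := μ) (r := 2)
  calc S ^ n * ContinuousLinearMap.adjoint S ^ n * Q * (S ^ n * ContinuousLinearMap.adjoint S ^ n)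
      = S ^ n * (ContinuousLinearMap.adjoint S ^ n * Q * S ^ n) *
          ContinuousLinearMap.adjoint S ^ n := by
        simp only [mul_assoc]
    _ = E * (S ^ n * ContinuousLinearMap.adjoint S ^ n) := by
        rw [adjoint_koopman_pow_mul_koopman_pow hp hμ hT hS hq hQ n hL,
          (hS.pow hT n).mul_eq_mul (hT.iterate n) hL hE, mul_assoc]

end KoopmanOperator

section KMS

variable {k : ℕ}

theorem integral_eq_of_iterate_ruelleOp_eq {W : ShiftSpace k → ℝ} (hW : Continuous W)
    {m : Measure (ShiftSpace k)} [IsFiniteMeasure m] {lam : ℝ} (hlam : lam ≠ 0)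
    (hm : ∀ f : ShiftSpace k → ℝ, Continuous f → ∫ x, ruelleOpR W f x ∂m = lam * ∫ x, f x ∂m)
    {F₁ F₂ : ShiftSpace k → ℂ} (hF₁ : Continuous F₁) (hF₂ : Continuous F₂) (n : ℕ)
    (h : (ruelleOp W)^[n] F₁ = (ruelleOp W)^[n] F₂) :
    ∫ x, F₁ x ∂m = ∫ x, F₂ x ∂m := by
  refine mul_left_cancel₀ (pow_ne_zero n (Complex.ofReal_ne_zero.2 hlam)) ?_
  rw [← integral_iterate_ruelleOp hW hm hF₁, ← integral_iterate_ruelleOp hW hm hF₂, h]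

theorem integral_kms {p H : ShiftSpace k → ℝ} (hp : Continuous p) (hH : Continuous H)
    (hH_pos : ∀ x, 0 < H x) {β lam : ℝ} (hlam : lam ≠ 0) {ν : Measure (ShiftSpace k)}
    [IsFiniteMeasure ν]
    (hν : ∀ f : ShiftSpace k → ℝ, Continuous f → ∫ x, ruelleH H β f x ∂ν = lam * ∫ x, f x ∂ν)
    {a b c d : ShiftSpace k → ℂ} (ha : Continuous a) (hb : Continuous b) (hc : Continuous c)
    (hd : Continuous d) (n : ℕ) :
    ∫ x, (a * condExpShift p n (b * (c * fun y => (hPow H (-β) n y : ℂ)))) x *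
        (lamInv p n x : ℂ) * ((fun y => (hPow H β n y : ℂ)) * d) x ∂ν =
      ∫ x, (c * condExpShift p n (d * a)) x * (lamInv p n x : ℂ) * b x ∂ν := by
  set ℓ : ShiftSpace k → ℂ := fun x => (lamInv p n x : ℂ)
  set Hβ : ShiftSpace k → ℂ := fun x => (hPow H β n x : ℂ)
  set Hnβ : ShiftSpace k → ℂ := fun x => (hPow H (-β) n x : ℂ)
  set Λ : ShiftSpace k → ℂ := fun x => (lamInv (p * fun y => H y ^ β) n x : ℂ)
  have hcont : ∀ γ : ℝ, Continuous fun x => (hPow H γ n x : ℂ) := fun γ =>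
    Complex.continuous_ofReal.comp (continuous_hPow hH hH_pos γ n)
  have hHnβ : Continuous fun x => H x ^ (-β) := hH.rpow_const fun x => Or.inl (hH_pos x).ne'
  have hℓ : Continuous ℓ := Complex.continuous_ofReal.comp (continuous_lamInv hp n)
  have hE₁ := continuous_condExpShift hp (hb.mul (hc.mul (hcont (-β)))) n
  have hE₂ := continuous_condExpShift hp (hd.mul ha) n
  have hweight : (fun x => H x ^ (-β)) * (p * fun x => H x ^ β) = p := funext fun x => by
    simp only [Pi.mul_apply, mul_left_comm _ (p x), Real.rpow_neg (hH_pos x).le,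
      inv_mul_cancel₀ (Real.rpow_pos_of_pos (hH_pos x) β).ne', mul_one]
  have hΛ : Λ = ℓ * Hβ := funext fun x => by
    simp only [Λ, lamInv_mul, ← hPow_eq_lamInv, Complex.ofReal_mul, Pi.mul_apply, ℓ, Hβ]
  have hinv : Hβ * Hnβ = 1 := funext fun x => by
    simp only [Pi.mul_apply, Hβ, Hnβ, ← Complex.ofReal_mul, hPow_mul_hPow_neg hH_pos,
      Complex.ofReal_one, Pi.one_apply]
  refine integral_eq_of_iterate_ruelleOp_eq hHnβ hlam hν
    (((ha.mul hE₁).mul hℓ).mul ((hcont β).mul hd)) (((hc.mul hE₂).mul hℓ).mul hb) n ?_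
  calc (ruelleOp fun x => H x ^ (-β))^[n] (a * condExpShift p n (b * (c * Hnβ)) * ℓ * (Hβ * d))
      = (ruelleOp fun x => H x ^ (-β))^[n] (condExpShift p n (b * (c * Hnβ)) * (Λ * (a * d))) := by
        rw [hΛ]; congr 1; ring
    _ = (ruelleOp p)^[n] (b * (c * Hnβ)) * (ruelleOp p)^[n] (a * d) :=
        iterate_ruelleOp_condExpShift_mul hweight n _ _
    _ = (ruelleOp p)^[n] (d * a) * (ruelleOp p)^[n] (Hnβ * (c * b)) := by
        rw [mul_comm]; congr 2 <;> ring
    _ = (ruelleOp fun x => H x ^ (-β))^[n] (condExpShift p n (d * a) * (Λ * (Hnβ * (c * b)))) :=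
        (iterate_ruelleOp_condExpShift_mul hweight n _ _).symm
    _ = (ruelleOp fun x => H x ^ (-β))^[n] (c * condExpShift p n (d * a) * ℓ * b) := by
        rw [hΛ]; congr 1; linear_combination (condExpShift p n (d * a) * ℓ * c * b) * hinv

end KMS
theorem kms_condition_on_generators_general {k : ℕ}
    (p : ShiftSpace k → ℝ) (hp_cont : Continuous p)
    (hp_norm : ∀ x : ShiftSpace k, ∑ i : Fin k, p (consS i x) = 1)
    (μ : Measure (ShiftSpace k)) [IsProbabilityMeasure μ]
    (hμ : ∀ f : ShiftSpace k → ℝ, Continuous f →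
      ∫ x, ruelleOpR p f x ∂μ = ∫ x, f x ∂μ)
    (H : ShiftSpace k → ℝ) (hH_cont : Continuous H) (hH_pos : ∀ x, 0 < H x)
    (β lamβ : ℝ) (hlam : 0 < lamβ)
    (ν : Measure (ShiftSpace k)) [IsProbabilityMeasure ν]
    (hν : ∀ f : ShiftSpace k → ℝ, Continuous f →
      ∫ x, ruelleH H β f x ∂ν = lamβ * ∫ x, f x ∂ν)
    (S : Lp ℂ 2 μ →L[ℂ] Lp ℂ 2 μ)
    (hS : ∀ η : Lp ℂ 2 μ, ∀ᵐ x ∂μ, S η x = η (shiftT x))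
    (e : ℕ → (Lp ℂ 2 μ →L[ℂ] Lp ℂ 2 μ))
    (he : ∀ n, e n = (S ^ n) * (ContinuousLinearMap.adjoint S) ^ n)
    (ψ : (Lp ℂ 2 μ →L[ℂ] Lp ℂ 2 μ) → ℂ)
    (hψ : ∀ f g : ShiftSpace k → ℂ, Continuous f → Continuous g → ∀ n : ℕ,
      ∀ Mf Mg : Lp ℂ 2 μ →L[ℂ] Lp ℂ 2 μ,
        (∀ η : Lp ℂ 2 μ, ∀ᵐ x ∂μ, Mf η x = f x * η x) →
        (∀ η : Lp ℂ 2 μ, ∀ᵐ x ∂μ, Mg η x = g x * η x) →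
        ψ (Mf * e n * Mg) =
          ∫ x, f x * (lamInv p n x : ℂ) * g x ∂ν)
    (a b c d : ShiftSpace k → ℂ)
    (ha : Continuous a) (hb : Continuous b) (hc : Continuous c) (hd : Continuous d)
    (n : ℕ)
    (Ma Mb Mc Md MHm MHp : Lp ℂ 2 μ →L[ℂ] Lp ℂ 2 μ)
    (hMa : ∀ η : Lp ℂ 2 μ, ∀ᵐ x ∂μ, Ma η x = a x * η x)
    (hMb : ∀ η : Lp ℂ 2 μ, ∀ᵐ x ∂μ, Mb η x = b x * η x)
    (hMc : ∀ η : Lp ℂ 2 μ, ∀ᵐ x ∂μ, Mc η x = c x * η x)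
    (hMd : ∀ η : Lp ℂ 2 μ, ∀ᵐ x ∂μ, Md η x = d x * η x)
    (hMHm : ∀ η : Lp ℂ 2 μ, ∀ᵐ x ∂μ, MHm η x = (hPow H (-β) n x : ℂ) * η x)
    (hMHp : ∀ η : Lp ℂ 2 μ, ∀ᵐ x ∂μ, MHp η x = (hPow H β n x : ℂ) * η x) :
    ψ ((Ma * e n * Mb) * (Mc * MHm * e n * MHp * Md)) =
      ψ ((Mc * e n * Md) * (Ma * e n * Mb)) := by
  have hT := (measurePreserving_shiftT hp_norm hμ).quasiMeasurePreserving
  have hHnβ : Continuous fun x => (hPow H (-β) n x : ℂ) :=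
    Complex.continuous_ofReal.comp (continuous_hPow hH_cont hH_pos (-β) n)
  have hHβ : Continuous fun x => (hPow H β n x : ℂ) :=
    Complex.continuous_ofReal.comp (continuous_hPow hH_cont hH_pos β n)
  have hE₁ := continuous_condExpShift hp_cont (hb.mul (hc.mul hHnβ)) n
  have hE₂ := continuous_condExpShift hp_cont (hd.mul ha) n
  obtain ⟨E₁, hME₁⟩ := hE₁.exists_isMultiplicationOperator (μ := μ) (r := 2)
  obtain ⟨E₂, hME₂⟩ := hE₂.exists_isMultiplicationOperator (μ := μ) (r := 2)
  have h₁ := koopman_sandwich_eq_condExpShift hp_cont hμ hT hS (hb.mul (hc.mul hHnβ))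
    (.mul hMb (.mul hMc hMHm)) n hME₁
  have h₂ := koopman_sandwich_eq_condExpShift hp_cont hμ hT hS (hd.mul ha) (.mul hMd hMa) n hME₂
  rw [← he n] at h₁ h₂
  have hlhs : (Ma * e n * Mb) * (Mc * MHm * e n * MHp * Md) = Ma * E₁ * e n * (MHp * Md) := by
    calc _ = Ma * (e n * (Mb * (Mc * MHm)) * e n) * (MHp * Md) := by simp only [mul_assoc]
      _ = _ := by rw [h₁]; simp only [mul_assoc]
  have hrhs : (Mc * e n * Md) * (Ma * e n * Mb) = Mc * E₂ * e n * Mb := by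
    calc _ = Mc * (e n * (Md * Ma) * e n) * Mb := by simp only [mul_assoc]
      _ = _ := by rw [h₂]; simp only [mul_assoc]
  rw [hlhs, hrhs, hψ _ _ (ha.mul hE₁) (hHβ.mul hd) n _ _ (IsMultiplicationOperator.mul hMa hME₁)
      (IsMultiplicationOperator.mul hMHp hMd),
    hψ _ _ (hc.mul hE₂) hb n _ _ (IsMultiplicationOperator.mul hMc hME₂) hMb]
  exact integral_kms hp_cont hH_cont hH_pos hlam.ne' hν ha hb hc hd n

theorem kms_condition_on_generators {k : ℕ} [NeZero k]
    (p : ShiftSpace k → ℝ) (hp_cont : Continuous p) (hp_pos : ∀ x, 0 < p x)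
    (hp_norm : ∀ x : ShiftSpace k, ∑ i : Fin k, p (consS i x) = 1)
    (hp_hold : HolderSeq fun x => Real.log (p x))
    (μ : Measure (ShiftSpace k)) [IsProbabilityMeasure μ]
    (hμ : ∀ f : ShiftSpace k → ℝ, Continuous f →
      ∫ x, ruelleOpR p f x ∂μ = ∫ x, f x ∂μ)
    (H : ShiftSpace k → ℝ) (hH_cont : Continuous H) (hH_pos : ∀ x, 0 < H x)
    (hH_hold : HolderSeq fun x => Real.log (H x))
    (β lamβ : ℝ) (hlam : 0 < lamβ)
    (ν : Measure (ShiftSpace k)) [IsProbabilityMeasure ν]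
    (hν : ∀ f : ShiftSpace k → ℝ, Continuous f →
      ∫ x, ruelleH H β f x ∂ν = lamβ * ∫ x, f x ∂ν)
    (S : Lp ℂ 2 μ →L[ℂ] Lp ℂ 2 μ)
    (hS : ∀ η : Lp ℂ 2 μ, ∀ᵐ x ∂μ, S η x = η (shiftT x))
    (e : ℕ → (Lp ℂ 2 μ →L[ℂ] Lp ℂ 2 μ))
    (he : ∀ n, e n = (S ^ n) * (ContinuousLinearMap.adjoint S) ^ n)
    (ψ : (Lp ℂ 2 μ →L[ℂ] Lp ℂ 2 μ) → ℂ)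
    (hψ : ∀ f g : ShiftSpace k → ℂ, Continuous f → Continuous g → ∀ n : ℕ,
      ∀ Mf Mg : Lp ℂ 2 μ →L[ℂ] Lp ℂ 2 μ,
        (∀ η : Lp ℂ 2 μ, ∀ᵐ x ∂μ, Mf η x = f x * η x) →
        (∀ η : Lp ℂ 2 μ, ∀ᵐ x ∂μ, Mg η x = g x * η x) →
        ψ (Mf * e n * Mg) =
          ∫ x, f x * (lamInv p n x : ℂ) * g x ∂ν)
    (a b c d : ShiftSpace k → ℂ)
    (ha : Continuous a) (hb : Continuous b) (hc : Continuous c) (hd : Continuous d)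
    (n : ℕ)
    (Ma Mb Mc Md MHm MHp : Lp ℂ 2 μ →L[ℂ] Lp ℂ 2 μ)
    (hMa : ∀ η : Lp ℂ 2 μ, ∀ᵐ x ∂μ, Ma η x = a x * η x)
    (hMb : ∀ η : Lp ℂ 2 μ, ∀ᵐ x ∂μ, Mb η x = b x * η x)
    (hMc : ∀ η : Lp ℂ 2 μ, ∀ᵐ x ∂μ, Mc η x = c x * η x)
    (hMd : ∀ η : Lp ℂ 2 μ, ∀ᵐ x ∂μ, Md η x = d x * η x)
    (hMHm : ∀ η : Lp ℂ 2 μ, ∀ᵐ x ∂μ, MHm η x = (hPow H (-β) n x : ℂ) * η x)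
    (hMHp : ∀ η : Lp ℂ 2 μ, ∀ᵐ x ∂μ, MHp η x = (hPow H β n x : ℂ) * η x) :
    ψ ((Ma * e n * Mb) * (Mc * MHm * e n * MHp * Md)) =
      ψ ((Mc * e n * Md) * (Ma * e n * Mb)) :=
  kms_condition_on_generators_general p hp_cont hp_norm μ hμ H hH_cont hH_pos β lamβ hlam ν hν S hS
    e he ψ hψ a b c d ha hb hc hd n Ma Mb Mc Md MHm MHp hMa hMb hMc hMd hMHm hMHp
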